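/- For every finite-dimensional Ŷ_{r,n}^K-module M one has the direct sum decomposition M = ⊕_{μ∈C_r(n)} M_μ of Ŷ_{r,n}^K-modules, where M_μ = Σ_{w∈S_n} g_w(I_μM). -/

import Mathlib

/- Common setup: the affine Yokonuma-Hecke algebra presented by generators and
relations, reduced words, Bruhat order, affine Hecke algebras (of tensor-product
type), isotypic components and induced modules. -/

set_option maxHeartbeats 1000000

open scoped TensorProduct

noncomputable section

namespace YH

/-- Generators of the affine Yokonuma-Hecke algebra: `t j` for `j : Fin n`,
`g i` (for `i` with `i+1 < n`, representing the transposition `(i, i+1)` in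
0-based indexing), and `X1`, `X1inv` (the generator `X_1` and its inverse). -/
inductive YGen (n : ℕ) : Type
  | t (j : Fin n) : YGen n
  | g (i : ℕ) (h : i + 1 < n) : YGen n
  | X1 : YGen n
  | X1inv : YGen n

variable (K : Type) [Field K] (r n : ℕ) (q : K)

/-- The free algebra on the generators. -/
abbrev FY := FreeAlgebra K (YGen n)

def tF (j : Fin n) : FY K n := FreeAlgebra.ι K (YGen.t j)
def gF (i : ℕ) (h : i + 1 < n) : FY K n := FreeAlgebra.ι K (YGen.g i h)
def X1F : FY K n := FreeAlgebra.ι K YGen.X1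
def X1invF : FY K n := FreeAlgebra.ι K YGen.X1inv

/-- The idempotent `e_i = (1/r) ∑_{s=0}^{r-1} t_i^s t_{i+1}^{-s}` (as an element
of the free algebra, with `t_{i+1}^{-s}` written as `t_{i+1}^{(r-s) % r}`,
using `t^r = 1`). -/
def eF (i : ℕ) (h : i + 1 < n) : FY K n :=
  (r : K)⁻¹ • ∑ s ∈ Finset.range r,
    tF K n ⟨i, by omega⟩ ^ s * tF K n ⟨i + 1, h⟩ ^ ((r - s) % r)

/-- The simple transposition `s_i = (i, i+1)` of `Fin n` (0-based). -/
def swapi (i : ℕ) (h : i + 1 < n) : Equiv.Perm (Fin n) :=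
  Equiv.swap ⟨i, by omega⟩ ⟨i + 1, h⟩

/-- Defining relations of the affine Yokonuma-Hecke algebra `Ŷ_{r,n}(q)` over `K`. -/
inductive YRel : FY K n → FY K n → Prop
  | gg {i j : ℕ} (hi : i + 1 < n) (hj : j + 1 < n) (hij : i + 2 ≤ j ∨ j + 2 ≤ i) :
      YRel (gF K n i hi * gF K n j hj) (gF K n j hj * gF K n i hi)
  | braid {i : ℕ} (h : i + 2 < n) :
      YRel (gF K n i (by omega) * gF K n (i + 1) h * gF K n i (by omega))
        (gF K n (i + 1) h * gF K n i (by omega) * gF K n (i + 1) h)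
  | tt (i j : Fin n) : YRel (tF K n i * tF K n j) (tF K n j * tF K n i)
  | gt {i : ℕ} (hi : i + 1 < n) (j : Fin n) :
      YRel (gF K n i hi * tF K n j) (tF K n (swapi n i hi j) * gF K n i hi)
  | tr (j : Fin n) : YRel (tF K n j ^ r) 1
  | gsq {i : ℕ} (hi : i + 1 < n) :
      YRel (gF K n i hi * gF K n i hi)
        (1 + (q - q⁻¹) • (eF K r n i hi * gF K n i hi))
  | XXinv : YRel (X1F K n * X1invF K n) 1
  | XinvX : YRel (X1invF K n * X1F K n) 1
  | gXgX (h : 1 < n) :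
      YRel (gF K n 0 (by omega) * X1F K n * gF K n 0 (by omega) * X1F K n)
        (X1F K n * gF K n 0 (by omega) * X1F K n * gF K n 0 (by omega))
  | gX {i : ℕ} (hi : i + 1 < n) (h1 : 1 ≤ i) :
      YRel (gF K n i hi * X1F K n) (X1F K n * gF K n i hi)
  | tX (j : Fin n) : YRel (tF K n j * X1F K n) (X1F K n * tF K n j)

/-- The affine Yokonuma-Hecke algebra `Ŷ_{r,n}^K`. -/
abbrev Y := RingQuot (YRel K r n q)

def mkY : FY K n →ₐ[K] Y K r n q := RingQuot.mkAlgHom K (YRel K r n q)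

/-- The generator `t_j` (0-based `j`). -/
def t (j : Fin n) : Y K r n q := mkY K r n q (tF K n j)
/-- The generator `g_i` (0-based `i`, `i+1 < n`). -/
def g (i : ℕ) (h : i + 1 < n) : Y K r n q := mkY K r n q (gF K n i h)
/-- The idempotent `e_i`. -/
def e (i : ℕ) (h : i + 1 < n) : Y K r n q := mkY K r n q (eF K r n i h)
def X1 : Y K r n q := mkY K r n q (X1F K n)
def X1inv : Y K r n q := mkY K r n q (X1invF K n)

/-- `X_{i+1} := g_i X_i g_i`, recursively. -/
def Xrec : (k : ℕ) → k < n → Y K r n q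
  | 0, _ => X1 K r n q
  | k + 1, h => g K r n q k (by omega) * Xrec k (by omega) * g K r n q k (by omega)

/-- The commuting elements `X_j` (0-based `j`). -/
def X (j : Fin n) : Y K r n q := Xrec K r n q j.1 j.2

/-! ### Words and reduced expressions -/

/-- A word in the simple transpositions. -/
abbrev Word := List {i : ℕ // i + 1 < n}

/-- The permutation represented by a word. -/
def permOfWord (l : Word n) : Equiv.Perm (Fin n) :=
  (l.map fun i => swapi n i.1 i.2).prod

/-- `l` is a reduced word for `w`. -/
def IsReducedWord (l : Word n) (w : Equiv.Perm (Fin n)) : Prop :=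
  permOfWord n l = w ∧ ∀ l' : Word n, permOfWord n l' = w → l.length ≤ l'.length

/-- The product `g_{i_1} ⋯ g_{i_k}` along a word. -/
def gword (l : Word n) : Y K r n q := (l.map fun i => g K r n q i.1 i.2).prod

/-- `gw` is the family `w ↦ g_w`, i.e. `g_w` is the product of the `g_i` along
any reduced expression of `w` (well defined by Matsumoto's lemma). -/
def GwSpec (gw : Equiv.Perm (Fin n) → Y K r n q) : Prop :=
  ∀ (w : Equiv.Perm (Fin n)) (l : Word n), IsReducedWord n l w → gw w = gword K r n q l

/-- Bruhat order: `u ≤ w` iff some reduced word of `w` has a subword which is a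
reduced word of `u`. -/
def BruhatLE (u w : Equiv.Perm (Fin n)) : Prop :=
  ∃ l : Word n, IsReducedWord n l w ∧ ∃ l' : Word n, l'.Sublist l ∧ IsReducedWord n l' u

def BruhatLT (u w : Equiv.Perm (Fin n)) : Prop := BruhatLE n u w ∧ u ≠ w

/-! ### Monomials and distinguished subalgebras -/

/-- `XU` is a family of units lifting the commuting elements `X_j` (each `X_j`
is invertible in `Ŷ_{r,n}^K`). -/
def XUSpec (XU : Fin n → (Y K r n q)ˣ) : Prop :=
  ∀ j, (XU j : Y K r n q) = X K r n q j

/-- The monomial `X^α = X_1^{α_1} ⋯ X_n^{α_n}`, `α ∈ ℤ^n`. -/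
def Xpow (XU : Fin n → (Y K r n q)ˣ) (α : Fin n → ℤ) : Y K r n q :=
  ((List.finRange n).map fun j => ((XU j ^ α j : (Y K r n q)ˣ) : Y K r n q)).prod

/-- The monomial `t^β = t_1^{β_1} ⋯ t_n^{β_n}`, `β ∈ (ℤ/rℤ)^n`. -/
def tpow (β : Fin n → ZMod r) : Y K r n q :=
  ((List.finRange n).map fun j => t K r n q j ^ (β j).val).prod

/-- The subalgebra `KT` generated by `t_1, …, t_n` (the group algebra of
`T = (ℤ/rℤ)^n`). -/
def KT : Subalgebra K (Y K r n q) := Algebra.adjoin K (Set.range (t K r n q))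

/-- The Laurent polynomial subalgebra `P_n^K` generated by `X_1^{±1}, …, X_n^{±1}`. -/
def Pn (XU : Fin n → (Y K r n q)ˣ) : Subalgebra K (Y K r n q) :=
  Algebra.adjoin K
    ((Set.range fun j => ((XU j : (Y K r n q)ˣ) : Y K r n q)) ∪
      (Set.range fun j => (((XU j)⁻¹ : (Y K r n q)ˣ) : Y K r n q)))

/-- The subalgebra `P_n^K(T)` generated by `t_1, …, t_n` and `X_1^{±1}, …, X_n^{±1}`. -/
def PT (XU : Fin n → (Y K r n q)ˣ) : Subalgebra K (Y K r n q) :=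
  Algebra.adjoin K
    (Set.range (t K r n q) ∪
      (Set.range fun j => ((XU j : (Y K r n q)ˣ) : Y K r n q)) ∪
      (Set.range fun j => (((XU j)⁻¹ : (Y K r n q)ˣ) : Y K r n q)))

/-- The subalgebra of `Ŷ_{r,n}^K` generated by all `t_j`, all `X_j^{±1}`, and the
`g_w` for `w` in a set `W` of permutations (e.g. a Young subgroup). -/
def Ysub (XU : Fin n → (Y K r n q)ˣ) (gw : Equiv.Perm (Fin n) → Y K r n q)
    (W : Set (Equiv.Perm (Fin n))) : Subalgebra K (Y K r n q) :=
  Algebra.adjoin K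
    (Set.range (t K r n q) ∪
      (Set.range fun j => ((XU j : (Y K r n q)ˣ) : Y K r n q)) ∪
      (Set.range fun j => (((XU j)⁻¹ : (Y K r n q)ˣ) : Y K r n q)) ∪
      (gw '' W))

/-- The Young subgroup `S_μ` attached to a block function `c : Fin n → Fin r`
(for monotone `c`, this is the Young subgroup of the composition `μ` whose
parts are the fiber sizes of `c`): permutations preserving the blocks. -/
def Smu (c : Fin n → Fin r) : Set (Equiv.Perm (Fin n)) :=
  {w : Equiv.Perm (Fin n) | ∀ j, c (w j) = c j}

/-- Permutations fixing all positions `≥ m` (the subgroup `S_m ⊆ S_n`). -/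
def SFix (m : ℕ) : Set (Equiv.Perm (Fin n)) :=
  {w : Equiv.Perm (Fin n) | ∀ j : Fin n, m ≤ j.1 → w j = j}

/-! ### Isotypic components -/

section Modules

variable (M : Type) [AddCommGroup M] [Module K M] [Module (Y K r n q) M]
  [IsScalarTower K (Y K r n q) M]

/-- The `V(μ)`-isotypic component of `M` as a `KT`-module: since `V(μ)` is the
one-dimensional `KT`-module on which `t_j` acts by the scalar `ζ^{c j}`, this is
the simultaneous eigenspace. Here `ζ` is a primitive `r`-th root of unity and
the simple `K(ℤ/rℤ)`-modules are `V_k : t ↦ ζ^{k}`, `k : Fin r`. -/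
def Imu (ζ : K) (c : Fin n → Fin r) : Submodule K M where
  carrier := {m : M | ∀ j : Fin n, t K r n q j • m = ζ ^ ((c j : ℕ)) • m}
  add_mem' := by
    intro a b ha hb
    intro j
    rw [smul_add, ha j, hb j, smul_add]
  zero_mem' := by intro j; simp
  smul_mem' := by
    intro k m hm
    intro j
    rw [smul_comm, hm j, smul_comm]

/-- `M_μ := ∑_{w ∈ S_n} g_w (I_μ M)`. -/
def Mmu (ζ : K) (c : Fin n → Fin r) (gw : Equiv.Perm (Fin n) → Y K r n q) :
    Submodule K M :=
  Submodule.span K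
    {x : M | ∃ w : Equiv.Perm (Fin n), ∃ m ∈ Imu K r n q M ζ c, x = gw w • m}

end Modules

/-! ### Affine Hecke algebras of type A (tensor-product form)

`HH K q n r c` is the tensor product `Ĥ_{μ_1}^K ⊗ ⋯ ⊗ Ĥ_{μ_r}^K` of affine Hecke
algebras, presented globally: generators `T_i` for those adjacencies `i, i+1`
lying in a common block of `c : Fin n → Fin r`, and invertible `Y_j` for all
`j`.  (For `r = 1` and `c` constant this is the affine Hecke algebra `Ĥ_n^K`.) -/

inductive HGen (n r : ℕ) (c : Fin n → Fin r) : Type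
  | T (i : ℕ) (h : i + 1 < n) (hc : c ⟨i, by omega⟩ = c ⟨i + 1, h⟩) : HGen n r c
  | Y (j : Fin n) : HGen n r c
  | Yinv (j : Fin n) : HGen n r c

end YH

namespace YH

variable (K : Type) [Field K] (q : K) {n r : ℕ}

abbrev FH (c : Fin n → Fin r) := FreeAlgebra K (HGen n r c)

def TFh (c : Fin n → Fin r) (i : ℕ) (h : i + 1 < n)
    (hc : c ⟨i, by omega⟩ = c ⟨i + 1, h⟩) : FH K c :=
  FreeAlgebra.ι K (HGen.T i h hc)
def YFh (c : Fin n → Fin r) (j : Fin n) : FH K c := FreeAlgebra.ι K (HGen.Y j)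
def YinvFh (c : Fin n → Fin r) (j : Fin n) : FH K c := FreeAlgebra.ι K (HGen.Yinv j)

/-- Defining relations of the (tensor product of) affine Hecke algebra(s). -/
inductive HRel (c : Fin n → Fin r) : FH K c → FH K c → Prop
  | quad {i : ℕ} (h : i + 1 < n) (hc : c ⟨i, by omega⟩ = c ⟨i + 1, h⟩) :
      HRel c ((TFh K c i h hc - algebraMap K (FH K c) q) *
          (TFh K c i h hc + algebraMap K (FH K c) q⁻¹)) 0
  | braid {i : ℕ} (h : i + 2 < n)
      (hc1 : c ⟨i, by omega⟩ = c ⟨i + 1, by omega⟩)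
      (hc2 : c ⟨i + 1, by omega⟩ = c ⟨i + 2, h⟩) :
      HRel c
        (TFh K c i (by omega) hc1 * TFh K c (i + 1) (by omega) hc2 *
          TFh K c i (by omega) hc1)
        (TFh K c (i + 1) (by omega) hc2 * TFh K c i (by omega) hc1 *
          TFh K c (i + 1) (by omega) hc2)
  | TT {i j : ℕ} (hi : i + 1 < n) (hci : c ⟨i, by omega⟩ = c ⟨i + 1, hi⟩)
      (hj : j + 1 < n) (hcj : c ⟨j, by omega⟩ = c ⟨j + 1, hj⟩)
      (hij : i + 2 ≤ j ∨ j + 2 ≤ i) :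
      HRel c (TFh K c i hi hci * TFh K c j hj hcj)
        (TFh K c j hj hcj * TFh K c i hi hci)
  | YY (j k : Fin n) : HRel c (YFh K c j * YFh K c k) (YFh K c k * YFh K c j)
  | YYinv (j : Fin n) : HRel c (YFh K c j * YinvFh K c j) 1
  | YinvY (j : Fin n) : HRel c (YinvFh K c j * YFh K c j) 1
  | TYT {i : ℕ} (h : i + 1 < n) (hc : c ⟨i, by omega⟩ = c ⟨i + 1, h⟩) :
      HRel c (TFh K c i h hc * YFh K c ⟨i, by omega⟩ * TFh K c i h hc)
        (YFh K c ⟨i + 1, h⟩)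
  | TY {i : ℕ} (h : i + 1 < n) (hc : c ⟨i, by omega⟩ = c ⟨i + 1, h⟩)
      (j : Fin n) (hj1 : j.1 ≠ i) (hj2 : j.1 ≠ i + 1) :
      HRel c (TFh K c i h hc * YFh K c j) (YFh K c j * TFh K c i h hc)

/-- The algebra `Ĥ_{μ_1}^K ⊗ ⋯ ⊗ Ĥ_{μ_r}^K` (for `c` monotone with fiber sizes
`μ_k`); for `r = 1` it is the affine Hecke algebra `Ĥ_n^K` of type `A`. -/
abbrev HH (c : Fin n → Fin r) := RingQuot (HRel K q c)

def mkH (c : Fin n → Fin r) : FH K c →ₐ[K] HH K q c := RingQuot.mkAlgHom K (HRel K q c)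

/-- The generator `T_i` (for an adjacency internal to a block of `c`). -/
def Tg (c : Fin n → Fin r) (i : ℕ) (h : i + 1 < n)
    (hc : c ⟨i, by omega⟩ = c ⟨i + 1, h⟩) : HH K q c :=
  mkH K q c (TFh K c i h hc)
/-- The generator `Y_j`. -/
def Yg (c : Fin n → Fin r) (j : Fin n) : HH K q c := mkH K q c (YFh K c j)
/-- The generator `Y_j^{-1}`. -/
def Yinvg (c : Fin n → Fin r) (j : Fin n) : HH K q c := mkH K q c (YinvFh K c j)

end YH

namespace YH

variable (K : Type) [Field K] (r n : ℕ) (q : K)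

/-! ### Actions and induced modules -/

/-- The action of an algebra `R` on a module `M` as an algebra homomorphism
`R →ₐ[K] End_K(M)`. -/
def actHom (R : Type) [Ring R] [Algebra K R] (M : Type) [AddCommGroup M] [Module K M]
    [Module R M] [IsScalarTower K R M] : R →ₐ[K] Module.End K M where
  toFun a :=
    { toFun := fun m => a • m
      map_add' := fun x y => smul_add a x y
      map_smul' := fun k m => (smul_comm k a m).symm }
  map_one' := by ext m; exact one_smul R m
  map_mul' a b := by ext m; exact mul_smul a b m
  map_zero' := by ext m; exact zero_smul R m
  map_add' a b := by ext m; exact add_smul a b m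
  commutes' k := by
    ext m
    simp [Module.algebraMap_end_apply, algebraMap_smul]

/-- A `K`-space `P` with action `ρ` of an algebra `R` is "simple" if it is
nonzero and has no proper nonzero `ρ`-stable subspace. -/
def SimpleVia {R : Type} [Ring R] [Algebra K R] {P : Type} [AddCommGroup P] [Module K P]
    (ρ : R →ₐ[K] Module.End K P) : Prop :=
  Nontrivial P ∧
    ∀ Q : Submodule K P, (∀ h : R, ∀ v ∈ Q, ρ h v ∈ Q) → Q = ⊥ ∨ Q = ⊤

/-- The relation submodule defining the induced module
`Ŷ_{r,n}^K ⊗_{Ŷ_{r,μ}^K} (V(μ) ⊗ P)`, where `P` is a module over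
`Ĥ_{μ_1}^K ⊗ ⋯ ⊗ Ĥ_{μ_r}^K` (given by `ρ`), and `V(μ)` is the one-dimensional
`KT`-module attached to `c` (and a primitive `r`-th root of unity `ζ`):
we quotient `Ŷ_{r,n}^K ⊗_K P` by the `Ŷ`-span of the relations
`t_j ⊗ p = ζ^{c j} (1 ⊗ p)`, `g_i ⊗ p = 1 ⊗ T_i p` (`i` internal), and
`X_j ⊗ p = 1 ⊗ Y_j p`. -/
def IndRel (ζ : K) (c : Fin n → Fin r) (P : Type) [AddCommGroup P] [Module K P]
    (ρ : HH K q c →ₐ[K] Module.End K P) :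
    Submodule (Y K r n q) (Y K r n q ⊗[K] P) :=
  Submodule.span (Y K r n q)
    ({z : Y K r n q ⊗[K] P | ∃ (j : Fin n) (p : P),
        z = t K r n q j ⊗ₜ[K] p - (1 : Y K r n q) ⊗ₜ[K] (ζ ^ ((c j : ℕ)) • p)} ∪
      {z | ∃ (i : ℕ) (hi : i + 1 < n) (hc : c ⟨i, by omega⟩ = c ⟨i + 1, hi⟩) (p : P),
        z = g K r n q i hi ⊗ₜ[K] p - (1 : Y K r n q) ⊗ₜ[K] (ρ (Tg K q c i hi hc) p)} ∪
      {z | ∃ (j : Fin n) (p : P),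
        z = X K r n q j ⊗ₜ[K] p - (1 : Y K r n q) ⊗ₜ[K] (ρ (Yg K q c j) p)})

/-- The induced `Ŷ_{r,n}^K`-module `S_μ(L.) = Ŷ_{r,n}^K ⊗_{Ŷ_{r,μ}^K} (V(μ) ⊗ P)`. -/
def Ind (ζ : K) (c : Fin n → Fin r) (P : Type) [AddCommGroup P] [Module K P]
    (ρ : HH K q c →ₐ[K] Module.End K P) : Type :=
  @HasQuotient.Quotient _ _ (@Submodule.hasQuotient (Y K r n q) (Y K r n q ⊗[K] P) _ _ _) (IndRel K r n q ζ c P ρ)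

instance (ζ : K) (c : Fin n → Fin r) (P : Type) [AddCommGroup P] [Module K P]
    (ρ : HH K q c →ₐ[K] Module.End K P) : AddCommGroup (Ind K r n q ζ c P ρ) :=
  inferInstanceAs (AddCommGroup (@HasQuotient.Quotient _ _ (@Submodule.hasQuotient (Y K r n q) (Y K r n q ⊗[K] P) _ _ _) (IndRel K r n q ζ c P ρ)))

instance (ζ : K) (c : Fin n → Fin r) (P : Type) [AddCommGroup P] [Module K P]
    (ρ : HH K q c →ₐ[K] Module.End K P) : Module (Y K r n q) (Ind K r n q ζ c P ρ) :=
  inferInstanceAs (Module (Y K r n q) (@HasQuotient.Quotient _ _ (@Submodule.hasQuotient (Y K r n q) (Y K r n q ⊗[K] P) _ _ _) (IndRel K r n q ζ c P ρ)))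

/-- The map skipping position `p`: `j ↦ j` if `j < p`, else `j ↦ j+1`
(the order embedding `Fin (n-1) → Fin n` avoiding `p`). -/
def skipIns (p : ℕ) (j : Fin (n - 1)) : Fin n :=
  if j.1 < p then ⟨j.1, by have := j.2; omega⟩ else ⟨j.1 + 1, by have := j.2; omega⟩

end YH

/-! The `t_j` commute and satisfy `t_j ^ r = 1` with `r` invertible in `K`, so `M` is the direct
sum of the simultaneous eigenspaces `I_f M`, `f : Fin n → Fin r`. The generators of `Ŷ_{r,n}^K`
permute these: `g_i` maps `I_f M` into `I_{f ∘ s_i} M` and `t_j`, `X_1^{±1}` preserve them. Hence the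
sum `N_μ` of the `I_f M` over the rearrangements `f` of `μ` is a submodule, and grouping the
eigenspaces by orbit gives `M = ⊕_μ N_μ`. It remains to see `M_μ = N_μ`. One inclusion is
`g_w (I_μ M) ⊆ I_{w μ} M`. For the other, `M_μ` is `g_i`-stable by the exchange property of reduced
words and the quadratic relation, in which `e_i` acts on each `I_f M` by `0` or `1`; then
`x = g_i² x - (q - q⁻¹) e_i g_i x` with `g_i x ∈ I_f M` moves `I_f M ⊆ M_μ` to `I_{f ∘ s_i} M ⊆ M_μ`. -/

theorem iSupIndep.iSup_fiber {ι κ α : Type*} [CompleteLattice α] [IsModularLattice α]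
    [IsCompactlyGenerated α] {t : ι → α} (ht : iSupIndep t) (p : ι → κ) :
    iSupIndep fun k => ⨆ (i) (_ : p i = k), t i := by
  intro k
  refine (ht.disjoint_biSup_biSup (s := {i | p i = k}) (t := {i | p i ≠ k})
    (Set.disjoint_left.2 fun _ h h' => h' h)).mono_right ?_
  exact iSup₂_le fun k' hk' => iSup₂_le fun i hi => le_biSup t (show p i ≠ k from hi ▸ hk')

theorem iSup_fiber {ι κ α : Type*} [CompleteLattice α] (t : ι → α) (p : ι → κ) :
    ⨆ (k) (i) (_ : p i = k), t i = ⨆ i, t i := by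
  rw [iSup_comm]
  simp

namespace Module.End

variable {K M ι : Type*} [Field K] [AddCommGroup M] [Module K M] {r : ℕ} {ζ : K}

lemma isSemisimple_of_pow_eq_one {T : End K M} (hr : (r : K) ≠ 0) (hT : T ^ r = 1) :
    T.IsSemisimple :=
  isSemisimple_of_squarefree_aeval_eq_zero
    (Polynomial.separable_X_pow_sub_C 1 hr one_ne_zero).squarefree (by simp [hT])

lemma eigenspace_eq_bot_of_pow_eq_one {T : End K M} (hT : T ^ r = 1) {μ : K} (hμ : μ ^ r ≠ 1) :
    T.eigenspace μ = ⊥ := by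
  refine (Submodule.eq_bot_iff _).2 fun x hx => ?_
  have hpow : ∀ k : ℕ, (T ^ k) x = μ ^ k • x := fun k => by
    induction k with
    | zero => simp
    | succ k ih => rw [pow_succ', mul_apply, ih, map_smul, mem_eigenspace_iff.1 hx, smul_smul,
        ← pow_succ]
  have : (μ ^ r - 1) • x = 0 := by rw [sub_smul, ← hpow, hT, one_apply, one_smul, sub_self]
  exact (smul_eq_zero.1 this).resolve_left (sub_ne_zero.2 hμ)

lemma maxGenEigenspace_eq_eigenspace_of_pow_eq_one {T : End K M} (hr : (r : K) ≠ 0)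
    (hT : T ^ r = 1) (μ : K) : T.maxGenEigenspace μ = T.eigenspace μ :=
  (isSemisimple_of_pow_eq_one hr hT).isFinitelySemisimple.maxGenEigenspace_eq_eigenspace μ

variable (T : ι → End K M) (hcomm : ∀ i j, Commute (T i) (T j)) (hr : (r : K) ≠ 0)
  (hT : ∀ i, T i ^ r = 1) (hζ : IsPrimitiveRoot ζ r)
include hcomm hr hT hζ

theorem iSupIndep_iInf_eigenspace_pow :
    iSupIndep fun f : ι → Fin r => ⨅ i, (T i).eigenspace (ζ ^ (f i : ℕ)) := by
  have key := independent_iInf_maxGenEigenspace_of_forall_mapsTo T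
    fun i j μ => mapsTo_maxGenEigenspace_of_comm (hcomm j i) μ
  simp_rw [maxGenEigenspace_eq_eigenspace_of_pow_eq_one hr (hT _)] at key
  exact key.comp fun f g hfg => funext fun i =>
    Fin.val_injective (hζ.pow_inj (f i).2 (g i).2 (congrFun hfg i))

theorem iSup_iInf_eigenspace_pow_eq_top [IsAlgClosed K] [FiniteDimensional K M] :
    ⨆ f : ι → Fin r, ⨅ i, (T i).eigenspace (ζ ^ (f i : ℕ)) = ⊤ := by
  have key := iSup_iInf_maxGenEigenspace_eq_top_of_iSup_maxGenEigenspace_eq_top_of_commute T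
    (fun i j _ => hcomm i j) fun i => iSup_maxGenEigenspace_eq_top (T i)
  simp_rw [maxGenEigenspace_eq_eigenspace_of_pow_eq_one hr (hT _)] at key
  rw [eq_top_iff, ← key]
  refine iSup_le fun χ => ?_
  by_cases hχ : ∀ i, χ i ^ r = 1
  · have : NeZero r := ⟨by rintro rfl; simp at hr⟩
    choose f hf using fun i => hζ.eq_pow_of_pow_eq_one (hχ i)
    refine le_iSup_of_le (fun i => ⟨f i, (hf i).1⟩) ?_
    simp only [(hf _).2, le_refl]
  · push Not at hχ
    obtain ⟨i, hi⟩ := hχ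
    exact (iInf_le _ i).trans ((eigenspace_eq_bot_of_pow_eq_one (hT i) hi).trans_le bot_le)

end Module.End

lemma IsPrimitiveRoot.sum_range_pow_mul_inv_pow {K : Type*} [Field K] {r : ℕ} {ζ : K}
    (hζ : IsPrimitiveRoot ζ r) (hr : r ≠ 0) (a b : Fin r) :
    ∑ s ∈ Finset.range r, (ζ ^ (a : ℕ) * (ζ ^ (b : ℕ))⁻¹) ^ s = if a = b then (r : K) else 0 := by
  split_ifs with hab
  · simp [hab, hζ.ne_zero hr]
  · have hne : ζ ^ (a : ℕ) * (ζ ^ (b : ℕ))⁻¹ ≠ 1 := fun h =>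
      hab (Fin.val_injective (hζ.pow_inj a.2 b.2
        (mul_inv_eq_one₀ (pow_ne_zero _ (hζ.ne_zero hr)) |>.1 h)))
    have hpow : (ζ ^ (a : ℕ) * (ζ ^ (b : ℕ))⁻¹) ^ r = 1 := by
      rw [mul_pow, inv_pow, ← pow_mul, ← pow_mul, mul_comm (a : ℕ), mul_comm (b : ℕ), pow_mul,
        pow_mul, hζ.pow_eq_one, one_pow, one_pow, inv_one, mul_one]
    have := geom_sum_mul (ζ ^ (a : ℕ) * (ζ ^ (b : ℕ))⁻¹) r
    rw [hpow, sub_self] at this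
    exact (mul_eq_zero.1 this).resolve_right (sub_ne_zero.2 hne)

lemma pow_sub_mod_eq_inv_pow {K : Type*} [Field K] {r s : ℕ} {μ : K} (hμ : μ ^ r = 1)
    (hs : s < r) : μ ^ ((r - s) % r) = μ⁻¹ ^ s := by
  rcases Nat.eq_zero_or_pos s with rfl | hs0
  · simp
  have hμ0 : μ ≠ 0 := by rintro rfl; simp [zero_pow (by omega : r ≠ 0)] at hμ
  rw [Nat.mod_eq_of_lt (by omega), pow_sub₀ _ hμ0 hs.le, hμ, one_mul, inv_pow]

namespace Tuple

variable {n : ℕ} {α : Type*} [LinearOrder α]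

def sortedRearrangement (f : Fin n → α) : {c : Fin n → α // Monotone c} :=
  ⟨f ∘ sort f, monotone_sort f⟩

lemma sortedRearrangement_comp_perm (f : Fin n → α) (σ : Equiv.Perm (Fin n)) :
    sortedRearrangement (f ∘ σ) = sortedRearrangement f :=
  Subtype.ext (unique_monotone (f := f) (σ := σ * sort (f ∘ σ)) (monotone_sort (f ∘ σ))
    (monotone_sort f))

lemma sortedRearrangement_eq_iff {c : {c : Fin n → α // Monotone c}} {f : Fin n → α} :
    sortedRearrangement f = c ↔ ∃ σ : Equiv.Perm (Fin n), f = c.1 ∘ σ := by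
  constructor
  · rintro rfl
    exact ⟨(sort f)⁻¹, by ext; simp [sortedRearrangement]⟩
  · rintro ⟨σ, rfl⟩
    rw [sortedRearrangement_comp_perm]
    exact Subtype.ext (unique_monotone (σ := sort c.1) (τ := 1) (monotone_sort c.1) c.2)

end Tuple

namespace YH

section Relations

variable {K : Type} [Field K] {r n : ℕ} {q : K}

lemma mkY_eq_of_rel {a b : FY K n} (h : YRel K r n q a b) : mkY K r n q a = mkY K r n q b :=
  RingQuot.mkAlgHom_rel K h

lemma t_mul_comm (j j' : Fin n) : t K r n q j * t K r n q j' = t K r n q j' * t K r n q j := by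
  simpa [t] using mkY_eq_of_rel (YRel.tt (K := K) (r := r) (q := q) j j')

lemma t_pow_r (j : Fin n) : t K r n q j ^ r = 1 := by
  simpa [t] using mkY_eq_of_rel (YRel.tr (K := K) (q := q) (r := r) j)

lemma t_mul_g (i : ℕ) (hi : i + 1 < n) (j : Fin n) :
    t K r n q j * g K r n q i hi = g K r n q i hi * t K r n q (swapi n i hi j) := by
  have := mkY_eq_of_rel (YRel.gt (K := K) (r := r) (q := q) hi (swapi n i hi j))
  simpa [t, g, swapi] using this.symm

lemma g_mul_g (i : ℕ) (hi : i + 1 < n) :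
    g K r n q i hi * g K r n q i hi = 1 + (q - q⁻¹) • (e K r n q i hi * g K r n q i hi) := by
  simpa [g, e] using mkY_eq_of_rel (YRel.gsq (K := K) (r := r) (q := q) hi)

lemma t_mul_X1 (j : Fin n) : t K r n q j * X1 K r n q = X1 K r n q * t K r n q j := by
  simpa [t, X1] using mkY_eq_of_rel (YRel.tX (K := K) (r := r) (q := q) j)

lemma X1_mul_X1inv : X1 K r n q * X1inv K r n q = 1 := by
  simpa [X1, X1inv] using mkY_eq_of_rel (YRel.XXinv (K := K) (r := r) (q := q) (n := n))

lemma X1inv_mul_X1 : X1inv K r n q * X1 K r n q = 1 := by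
  simpa [X1, X1inv] using mkY_eq_of_rel (YRel.XinvX (K := K) (r := r) (q := q) (n := n))

lemma t_mul_X1inv (j : Fin n) : t K r n q j * X1inv K r n q = X1inv K r n q * t K r n q j :=
  calc t K r n q j * X1inv K r n q
      = X1inv K r n q * (X1 K r n q * t K r n q j) * X1inv K r n q := by
        rw [← mul_assoc, X1inv_mul_X1, one_mul]
    _ = X1inv K r n q * t K r n q j * (X1 K r n q * X1inv K r n q) := by
        rw [← t_mul_X1]; noncomm_ring
    _ = X1inv K r n q * t K r n q j := by rw [X1_mul_X1inv, mul_one]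

lemma e_eq_sum (i : ℕ) (hi : i + 1 < n) :
    e K r n q i hi = (r : K)⁻¹ • ∑ s ∈ Finset.range r,
      t K r n q ⟨i, by omega⟩ ^ s * t K r n q ⟨i + 1, hi⟩ ^ ((r - s) % r) := by
  simp [e, eF, t]

end Relations

section Isotypic

variable {K : Type} [Field K] {r n : ℕ} {q ζ : K}
variable {M : Type} [AddCommGroup M] [Module K M] [Module (Y K r n q) M]
  [IsScalarTower K (Y K r n q) M]

lemma t_smul_of_mem_Imu {f : Fin n → Fin r} {x : M} (hx : x ∈ Imu K r n q M ζ f) (j : Fin n) :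
    t K r n q j • x = ζ ^ (f j : ℕ) • x :=
  hx j

lemma t_pow_smul_of_mem_Imu {f : Fin n → Fin r} {x : M} (hx : x ∈ Imu K r n q M ζ f)
    (j : Fin n) (s : ℕ) : t K r n q j ^ s • x = (ζ ^ (f j : ℕ)) ^ s • x := by
  induction s with
  | zero => simp
  | succ s ih => rw [pow_succ, mul_smul, t_smul_of_mem_Imu hx, smul_comm, ih, smul_smul, pow_succ']

lemma Imu_eq_iInf_eigenspace (f : Fin n → Fin r) :
    Imu K r n q M ζ f = ⨅ j, (actHom K (Y K r n q) M (t K r n q j)).eigenspace (ζ ^ (f j : ℕ)) := by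
  ext x
  simp only [Submodule.mem_iInf, Module.End.mem_eigenspace_iff]
  rfl

lemma g_smul_mem_Imu {f : Fin n → Fin r} {x : M} (hx : x ∈ Imu K r n q M ζ f)
    (i : ℕ) (hi : i + 1 < n) : g K r n q i hi • x ∈ Imu K r n q M ζ (f ∘ swapi n i hi) := by
  intro j
  rw [← mul_smul, t_mul_g, mul_smul, t_smul_of_mem_Imu hx, smul_comm]
  rfl

lemma X1_smul_mem_Imu {f : Fin n → Fin r} {x : M} (hx : x ∈ Imu K r n q M ζ f) :
    X1 K r n q • x ∈ Imu K r n q M ζ f := by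
  intro j
  rw [← mul_smul, t_mul_X1, mul_smul, t_smul_of_mem_Imu hx, smul_comm]

lemma X1inv_smul_mem_Imu {f : Fin n → Fin r} {x : M} (hx : x ∈ Imu K r n q M ζ f) :
    X1inv K r n q • x ∈ Imu K r n q M ζ f := by
  intro j
  rw [← mul_smul, t_mul_X1inv, mul_smul, t_smul_of_mem_Imu hx, smul_comm]

lemma e_smul_of_mem_Imu (hr : (r : K) ≠ 0) (hζ : IsPrimitiveRoot ζ r) {f : Fin n → Fin r}
    {x : M} (hx : x ∈ Imu K r n q M ζ f) (i : ℕ) (hi : i + 1 < n) :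
    e K r n q i hi • x = if f ⟨i, by omega⟩ = f ⟨i + 1, hi⟩ then x else 0 := by
  have hr0 : r ≠ 0 := by rintro rfl; simp at hr
  have hterm : ∀ s ∈ Finset.range r,
      (t K r n q ⟨i, by omega⟩ ^ s * t K r n q ⟨i + 1, hi⟩ ^ ((r - s) % r)) • x
        = (ζ ^ (f ⟨i, by omega⟩ : ℕ) * (ζ ^ (f ⟨i + 1, hi⟩ : ℕ))⁻¹) ^ s • x := by
    intro s hs
    have hμ : (ζ ^ (f ⟨i + 1, hi⟩ : ℕ)) ^ r = 1 := by
      rw [← pow_mul, mul_comm, pow_mul, hζ.pow_eq_one, one_pow]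
    rw [mul_smul, t_pow_smul_of_mem_Imu hx, smul_comm, t_pow_smul_of_mem_Imu hx, smul_smul,
      pow_sub_mod_eq_inv_pow hμ (Finset.mem_range.1 hs), ← mul_pow, mul_comm]
  rw [e_eq_sum, smul_assoc, Finset.sum_smul, Finset.sum_congr rfl hterm, ← Finset.sum_smul,
    hζ.sum_range_pow_mul_inv_pow hr0, smul_smul]
  split_ifs <;> simp [hr]

lemma g_smul_g_smul (i : ℕ) (hi : i + 1 < n) (x : M) :
    g K r n q i hi • g K r n q i hi • x =
      x + (q - q⁻¹) • e K r n q i hi • g K r n q i hi • x := by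
  rw [← mul_smul, g_mul_g, add_smul, one_smul, smul_assoc, mul_smul]

end Isotypic

section Words

variable {K : Type} [Field K] {r n : ℕ} {q : K}

lemma permOfWord_cons (a : {i : ℕ // i + 1 < n}) (l : Word n) :
    permOfWord n (a :: l) = swapi n a.1 a.2 * permOfWord n l := by
  simp [permOfWord]

lemma gword_cons (a : {i : ℕ // i + 1 < n}) (l : Word n) :
    gword K r n q (a :: l) = g K r n q a.1 a.2 * gword K r n q l := by
  simp [gword]

lemma sign_permOfWord (l : Word n) : Equiv.Perm.sign (permOfWord n l) = (-1) ^ l.length := by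
  induction l with
  | nil => simp [permOfWord]
  | cons a l ih =>
    rw [permOfWord_cons, map_mul, ih, swapi, Equiv.Perm.sign_swap (by simp [Fin.ext_iff]),
      List.length_cons, pow_succ']

lemma length_mod_two_eq_of_permOfWord_eq {l l' : Word n} (h : permOfWord n l = permOfWord n l') :
    l.length % 2 = l'.length % 2 := by
  have hs := congrArg Equiv.Perm.sign h
  rw [sign_permOfWord, sign_permOfWord, Int.units_pow_eq_pow_mod_two,
    Int.units_pow_eq_pow_mod_two _ l'.length] at hs
  rcases Nat.mod_two_eq_zero_or_one l.length with h1 | h1 <;>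
    rcases Nat.mod_two_eq_zero_or_one l'.length with h2 | h2 <;>
    simp_all

lemma exists_permOfWord_eq (w : Equiv.Perm (Fin n)) : ∃ l : Word n, permOfWord n l = w := by
  rcases n with _ | m
  · exact ⟨[], Subsingleton.elim _ _⟩
  have hw : w ∈ Submonoid.closure (Set.range fun i : Fin m ↦ Equiv.swap i.castSucc i.succ) := by
    rw [Equiv.Perm.mclosure_swap_castSucc_succ]; trivial
  induction hw using Submonoid.closure_induction with
  | mem _ h =>
    obtain ⟨i, rfl⟩ := h
    exact ⟨[⟨i.1, by omega⟩], by simp [permOfWord, swapi, Fin.castSucc, Fin.succ]; rfl⟩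
  | one => exact ⟨[], rfl⟩
  | mul _ _ _ _ h₁ h₂ =>
    obtain ⟨l₁, rfl⟩ := h₁
    obtain ⟨l₂, rfl⟩ := h₂
    exact ⟨l₁ ++ l₂, by simp [permOfWord]⟩

lemma exists_isReducedWord (w : Equiv.Perm (Fin n)) : ∃ l : Word n, IsReducedWord n l w := by
  classical
  obtain ⟨l₀, hl₀⟩ := exists_permOfWord_eq w
  have hex : ∃ k, ∃ l : Word n, l.length = k ∧ permOfWord n l = w := ⟨_, l₀, rfl, hl₀⟩
  obtain ⟨l, hlen, hl⟩ := Nat.find_spec hex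
  exact ⟨l, hl, fun l' hl' => hlen ▸ Nat.find_min' hex ⟨l', rfl, hl'⟩⟩

/-- Exchange property: `ℓ(s_a w) = ℓ(w) ± 1`, since minimality bounds the change by one and
parity excludes `0`. -/
lemma IsReducedWord.cons_or_cons {w : Equiv.Perm (Fin n)} {lw lu : Word n}
    (a : {i : ℕ // i + 1 < n}) (hw : IsReducedWord n lw w)
    (hu : IsReducedWord n lu (swapi n a.1 a.2 * w)) :
    IsReducedWord n (a :: lw) (swapi n a.1 a.2 * w) ∨ IsReducedWord n (a :: lu) w := by
  have hcons_w : permOfWord n (a :: lw) = swapi n a.1 a.2 * w := by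
    rw [permOfWord_cons, hw.1]
  have hcons_u : permOfWord n (a :: lu) = w := by
    rw [permOfWord_cons, hu.1, ← mul_assoc, swapi, Equiv.swap_mul_self, one_mul]
  have h1 := hu.2 _ hcons_w
  have h2 := hw.2 _ hcons_u
  have hpar := length_mod_two_eq_of_permOfWord_eq (hcons_w.trans hu.1.symm)
  simp only [List.length_cons] at h1 h2 hpar
  rcases Nat.lt_or_gt_of_ne (show lw.length ≠ lu.length by omega) with hlt | hgt
  · exact .inl ⟨hcons_w, fun l' hl' => by have := hu.2 l' hl'; simp only [List.length_cons]; omega⟩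
  · exact .inr ⟨hcons_u, fun l' hl' => by have := hw.2 l' hl'; simp only [List.length_cons]; omega⟩

end Words

section Orbit

variable (K : Type) [Field K] (r n : ℕ) (q : K)
variable (M : Type) [AddCommGroup M] [Module K M] [Module (Y K r n q) M]
  [IsScalarTower K (Y K r n q) M]

def orbitIsotypic (ζ : K) (c : Fin n → Fin r) : Submodule K M :=
  ⨆ σ : Equiv.Perm (Fin n), Imu K r n q M ζ (c ∘ σ)

variable {K r n q M}
variable {ζ : K}

lemma smul_mem_of_generators {N : Submodule K M}
    (ht : ∀ j, ∀ x ∈ N, t K r n q j • x ∈ N) (hg : ∀ i hi, ∀ x ∈ N, g K r n q i hi • x ∈ N)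
    (hX : ∀ x ∈ N, X1 K r n q • x ∈ N) (hXinv : ∀ x ∈ N, X1inv K r n q • x ∈ N)
    (a : Y K r n q) : ∀ x ∈ N, a • x ∈ N := by
  obtain ⟨b, rfl⟩ := RingQuot.mkAlgHom_surjective K (YRel K r n q) a
  induction b using FreeAlgebra.induction with
  | grade0 k =>
    intro x hx
    rw [AlgHom.commutes, algebraMap_smul]
    exact N.smul_mem k hx
  | grade1 s =>
    cases s with
    | t j => exact ht j
    | g i hi => exact hg i hi
    | X1 => exact hX
    | X1inv => exact hXinv
  | mul a b ha hb =>
    intro x hx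
    rw [map_mul, mul_smul]
    exact ha _ (hb x hx)
  | add a b ha hb =>
    intro x hx
    rw [map_add, add_smul]
    exact add_mem (ha x hx) (hb x hx)

lemma Imu_le_orbitIsotypic (c : Fin n → Fin r) (σ : Equiv.Perm (Fin n)) :
    Imu K r n q M ζ (c ∘ σ) ≤ orbitIsotypic K r n q M ζ c :=
  le_iSup (fun σ : Equiv.Perm (Fin n) => Imu K r n q M ζ (c ∘ σ)) σ

lemma smul_mem_orbitIsotypic_of_forall {c : Fin n → Fin r} {a : Y K r n q}
    (h : ∀ σ : Equiv.Perm (Fin n), ∃ σ' : Equiv.Perm (Fin n),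
      ∀ x ∈ Imu K r n q M ζ (c ∘ σ), a • x ∈ Imu K r n q M ζ (c ∘ σ'))
    {x : M} (hx : x ∈ orbitIsotypic K r n q M ζ c) : a • x ∈ orbitIsotypic K r n q M ζ c := by
  refine (iSup_le fun σ y hy => ?_ : orbitIsotypic K r n q M ζ c ≤
    (orbitIsotypic K r n q M ζ c).comap (actHom K (Y K r n q) M a)) hx
  obtain ⟨σ', hσ'⟩ := h σ
  exact Imu_le_orbitIsotypic c σ' (hσ' y hy)

lemma smul_mem_orbitIsotypic (c : Fin n → Fin r) (a : Y K r n q) {x : M}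
    (hx : x ∈ orbitIsotypic K r n q M ζ c) : a • x ∈ orbitIsotypic K r n q M ζ c := by
  refine smul_mem_of_generators (fun j _ => smul_mem_orbitIsotypic_of_forall fun σ => ⟨σ, ?_⟩)
    (fun i hi _ => smul_mem_orbitIsotypic_of_forall fun σ => ⟨σ * swapi n i hi, ?_⟩)
    (fun _ => smul_mem_orbitIsotypic_of_forall fun σ => ⟨σ, fun _ => X1_smul_mem_Imu⟩)
    (fun _ => smul_mem_orbitIsotypic_of_forall fun σ => ⟨σ, fun _ => X1inv_smul_mem_Imu⟩) a x hx
  · exact fun y hy => t_smul_of_mem_Imu hy j ▸ Submodule.smul_mem _ _ hy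
  · exact fun y hy => g_smul_mem_Imu hy i hi

lemma orbitIsotypic_eq_iSup_sortedRearrangement (c : {c : Fin n → Fin r // Monotone c}) :
    orbitIsotypic K r n q M ζ c.1 =
      ⨆ (f) (_ : Tuple.sortedRearrangement f = c), Imu K r n q M ζ f := by
  refine le_antisymm (iSup_le fun σ => ?_) (iSup₂_le fun f hf => ?_)
  · exact le_iSup₂_of_le (c.1 ∘ σ) (Tuple.sortedRearrangement_eq_iff.2 ⟨σ, rfl⟩) le_rfl
  · obtain ⟨σ, rfl⟩ := Tuple.sortedRearrangement_eq_iff.1 hf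
    exact Imu_le_orbitIsotypic c.1 σ

end Orbit

section Mmu

variable {K : Type} [Field K] {r n : ℕ} {q ζ : K}
variable {M : Type} [AddCommGroup M] [Module K M] [Module (Y K r n q) M]
  [IsScalarTower K (Y K r n q) M]
variable {gw : Equiv.Perm (Fin n) → Y K r n q}

lemma gword_smul_mem_Imu {f : Fin n → Fin r} {x : M} (hx : x ∈ Imu K r n q M ζ f) (l : Word n) :
    gword K r n q l • x ∈ Imu K r n q M ζ (f ∘ ⇑(permOfWord n l)⁻¹) := by
  induction l with
  | nil => simpa [gword, permOfWord] using hx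
  | cons a l ih =>
    rw [gword_cons, mul_smul, permOfWord_cons, mul_inv_rev, swapi, Equiv.swap_inv]
    exact g_smul_mem_Imu ih a.1 a.2

lemma gw_smul_mem_Imu (hgw : GwSpec K r n q gw) {c : Fin n → Fin r} {m : M}
    (hm : m ∈ Imu K r n q M ζ c) (w : Equiv.Perm (Fin n)) :
    gw w • m ∈ Imu K r n q M ζ (c ∘ ⇑w⁻¹) := by
  obtain ⟨l, hl⟩ := exists_isReducedWord w
  rw [hgw w l hl, ← hl.1]
  exact gword_smul_mem_Imu hm l

lemma gw_smul_mem_Mmu {c : Fin n → Fin r} {m : M} (hm : m ∈ Imu K r n q M ζ c)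
    (w : Equiv.Perm (Fin n)) : gw w • m ∈ Mmu K r n q M ζ c gw :=
  Submodule.subset_span ⟨w, m, hm, rfl⟩

lemma Imu_le_Mmu (hgw : GwSpec K r n q gw) (c : Fin n → Fin r) :
    Imu K r n q M ζ c ≤ Mmu K r n q M ζ c gw := fun m hm => by
  have h1 : gw 1 = 1 := hgw 1 [] ⟨rfl, fun _ _ => Nat.zero_le _⟩
  simpa [h1] using gw_smul_mem_Mmu (gw := gw) hm 1

lemma Mmu_le_orbitIsotypic (hgw : GwSpec K r n q gw) (c : Fin n → Fin r) :
    Mmu K r n q M ζ c gw ≤ orbitIsotypic K r n q M ζ c :=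
  Submodule.span_le.2 fun _ ⟨w, _, hm, hx⟩ =>
    hx ▸ Imu_le_orbitIsotypic c w⁻¹ (gw_smul_mem_Imu hgw hm w)

variable (hr : (r : K) ≠ 0) (hζ : IsPrimitiveRoot ζ r) (hgw : GwSpec K r n q gw)
include hr hζ hgw

/-- Either `g_i g_w = g_{s_i w}`, or `g_w = g_i g_{s_i w}` and the quadratic relation
rewrites `g_i g_w` as `g_{s_i w} + (q - q⁻¹) e_i g_w`, where `e_i` acts on `g_w m` by `0` or `1`. -/
lemma g_smul_gw_smul_mem_Mmu {c : Fin n → Fin r} {m : M} (hm : m ∈ Imu K r n q M ζ c)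
    (i : ℕ) (hi : i + 1 < n) (w : Equiv.Perm (Fin n)) :
    g K r n q i hi • gw w • m ∈ Mmu K r n q M ζ c gw := by
  obtain ⟨lw, hlw⟩ := exists_isReducedWord w
  obtain ⟨lu, hlu⟩ := exists_isReducedWord (swapi n i hi * w)
  rcases IsReducedWord.cons_or_cons ⟨i, hi⟩ hlw hlu with h | h
  · have hu : gw (swapi n i hi * w) = g K r n q i hi * gw w := by
      rw [hgw _ _ h, gword_cons, hgw w lw hlw]
    rw [← mul_smul, ← hu]
    exact gw_smul_mem_Mmu hm _
  · have hw : gw w = g K r n q i hi * gw (swapi n i hi * w) := by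
      rw [hgw w _ h, gword_cons, hgw _ lu hlu]
    rw [hw, mul_smul, g_smul_g_smul, ← mul_smul (g K r n q i hi), ← hw,
      e_smul_of_mem_Imu hr hζ (gw_smul_mem_Imu hgw hm w)]
    refine add_mem (gw_smul_mem_Mmu hm _) (Submodule.smul_mem _ _ ?_)
    split_ifs
    exacts [gw_smul_mem_Mmu hm w, zero_mem _]

lemma g_smul_mem_Mmu {c : Fin n → Fin r} (i : ℕ) (hi : i + 1 < n) {x : M}
    (hx : x ∈ Mmu K r n q M ζ c gw) : g K r n q i hi • x ∈ Mmu K r n q M ζ c gw := by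
  induction hx using Submodule.span_induction with
  | mem x hx =>
    obtain ⟨w, m, hm, rfl⟩ := hx
    exact g_smul_gw_smul_mem_Mmu hr hζ hgw hm i hi w
  | zero => simp
  | add x y _ _ hx hy => rw [smul_add]; exact add_mem hx hy
  | smul k x _ hx => rw [smul_comm]; exact Submodule.smul_mem _ k hx

lemma Imu_comp_swapi_le_Mmu {c f : Fin n → Fin r} (hf : Imu K r n q M ζ f ≤ Mmu K r n q M ζ c gw)
    (i : ℕ) (hi : i + 1 < n) :
    Imu K r n q M ζ (f ∘ swapi n i hi) ≤ Mmu K r n q M ζ c gw := by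
  intro x hx
  have hgx : g K r n q i hi • x ∈ Imu K r n q M ζ f := by
    simpa [Function.comp_def, swapi, Equiv.swap_apply_self] using g_smul_mem_Imu hx i hi
  have hex : x = g K r n q i hi • g K r n q i hi • x -
      (q - q⁻¹) • e K r n q i hi • g K r n q i hi • x := by
    rw [g_smul_g_smul, add_sub_cancel_right]
  rw [hex, e_smul_of_mem_Imu hr hζ hgx]
  refine sub_mem (g_smul_mem_Mmu hr hζ hgw i hi (hf hgx)) (Submodule.smul_mem _ _ ?_)
  split_ifs
  exacts [hf hgx, zero_mem _]

lemma orbitIsotypic_le_Mmu (c : Fin n → Fin r) :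
    orbitIsotypic K r n q M ζ c ≤ Mmu K r n q M ζ c gw := by
  have key : ∀ (l : Word n) (f : Fin n → Fin r), Imu K r n q M ζ f ≤ Mmu K r n q M ζ c gw →
      Imu K r n q M ζ (f ∘ permOfWord n l) ≤ Mmu K r n q M ζ c gw := by
    intro l
    induction l with
    | nil => exact fun f hf => hf
    | cons a l ih =>
      intro f hf
      rw [permOfWord_cons, Equiv.Perm.coe_mul, ← Function.comp_assoc]
      exact ih _ (Imu_comp_swapi_le_Mmu hr hζ hgw hf a.1 a.2)
  refine iSup_le fun σ => ?_
  obtain ⟨l, rfl⟩ := exists_permOfWord_eq σ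
  exact key l c (Imu_le_Mmu hgw c)

lemma Mmu_eq_orbitIsotypic (c : Fin n → Fin r) :
    Mmu K r n q M ζ c gw = orbitIsotypic K r n q M ζ c :=
  (Mmu_le_orbitIsotypic hgw c).antisymm (orbitIsotypic_le_Mmu hr hζ hgw c)

end Mmu

section Decomposition

variable {K : Type} [Field K] {r n : ℕ} {q ζ : K}
variable {M : Type} [AddCommGroup M] [Module K M] [Module (Y K r n q) M]
  [IsScalarTower K (Y K r n q) M]

lemma commute_actHom_t (i j : Fin n) :
    Commute (actHom K (Y K r n q) M (t K r n q i)) (actHom K (Y K r n q) M (t K r n q j)) := by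
  rw [Commute, SemiconjBy, ← map_mul, t_mul_comm, map_mul]

lemma actHom_t_pow_r (j : Fin n) : actHom K (Y K r n q) M (t K r n q j) ^ r = 1 := by
  rw [← map_pow, t_pow_r, map_one]

lemma iSupIndep_Imu (hr : (r : K) ≠ 0) (hζ : IsPrimitiveRoot ζ r) :
    iSupIndep fun f : Fin n → Fin r => Imu K r n q M ζ f := by
  simpa only [Imu_eq_iInf_eigenspace] using
    Module.End.iSupIndep_iInf_eigenspace_pow _ commute_actHom_t hr actHom_t_pow_r hζ

lemma iSup_Imu_eq_top [IsAlgClosed K] [FiniteDimensional K M] (hr : (r : K) ≠ 0)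
    (hζ : IsPrimitiveRoot ζ r) : ⨆ f : Fin n → Fin r, Imu K r n q M ζ f = ⊤ := by
  simpa only [Imu_eq_iInf_eigenspace] using
    Module.End.iSup_iInf_eigenspace_pow_eq_top _ commute_actHom_t hr actHom_t_pow_r hζ

end Decomposition

end YH

theorem statement7_general (K : Type) [Field K] [IsAlgClosed K] (r n : ℕ)
    (hrK : (r : K) ≠ 0) (q : K)
    (ζ : K) (hζ : IsPrimitiveRoot ζ r)
    (gw : Equiv.Perm (Fin n) → YH.Y K r n q) (hgw : YH.GwSpec K r n q gw)
    (M : Type) [AddCommGroup M] [Module K M] [Module (YH.Y K r n q) M]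
    [IsScalarTower K (YH.Y K r n q) M] [FiniteDimensional K M] :
    (∀ (c : {c : Fin n → Fin r // Monotone c}) (a : YH.Y K r n q) (x : M),
        x ∈ YH.Mmu K r n q M ζ c.1 gw → a • x ∈ YH.Mmu K r n q M ζ c.1 gw) ∧
    iSupIndep (fun c : {c : Fin n → Fin r // Monotone c} =>
      YH.Mmu K r n q M ζ c.1 gw) ∧
    (⨆ c : {c : Fin n → Fin r // Monotone c}, YH.Mmu K r n q M ζ c.1 gw) = ⊤ := by
  have hM : ∀ c : {c : Fin n → Fin r // Monotone c}, YH.Mmu K r n q M ζ c.1 gw =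
      ⨆ (f) (_ : Tuple.sortedRearrangement f = c), YH.Imu K r n q M ζ f := fun c => by
    rw [YH.Mmu_eq_orbitIsotypic hrK hζ hgw, YH.orbitIsotypic_eq_iSup_sortedRearrangement]
  refine ⟨fun c a x hx => ?_, ?_, ?_⟩
  · rw [YH.Mmu_eq_orbitIsotypic hrK hζ hgw] at hx ⊢
    exact YH.smul_mem_orbitIsotypic c.1 a hx
  · simpa only [hM] using (YH.iSupIndep_Imu hrK hζ).iSup_fiber Tuple.sortedRearrangement
  · simpa only [hM, iSup_fiber] using YH.iSup_Imu_eq_top hrK hζ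

/-- Lemma 3.3 of the paper: for every finite-dimensional
`Ŷ_{r,n}^K`-module `M`, the submodules `M_μ = ∑_{w ∈ S_n} g_w(I_μM)`, as `μ`
ranges over the `r`-compositions of `n` (encoded by monotone block functions
`c : Fin n → Fin r`), are `Ŷ_{r,n}^K`-stable, independent, and sum to `M`:
`M = ⊕_{μ ∈ C_r(n)} M_μ` in `Ŷ_{r,n}^K`-mod. -/
theorem statement7 (K : Type) [Field K] [IsAlgClosed K] (r n : ℕ) (hr : 0 < r) (hn : 0 < n)
    (hrK : (r : K) ≠ 0) (q : K) (hq : q ≠ 0)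
    (ζ : K) (hζ : IsPrimitiveRoot ζ r)
    (gw : Equiv.Perm (Fin n) → YH.Y K r n q) (hgw : YH.GwSpec K r n q gw)
    (M : Type) [AddCommGroup M] [Module K M] [Module (YH.Y K r n q) M]
    [IsScalarTower K (YH.Y K r n q) M] [FiniteDimensional K M] :
    (∀ (c : {c : Fin n → Fin r // Monotone c}) (a : YH.Y K r n q) (x : M),
        x ∈ YH.Mmu K r n q M ζ c.1 gw → a • x ∈ YH.Mmu K r n q M ζ c.1 gw) ∧
    iSupIndep (fun c : {c : Fin n → Fin r // Monotone c} =>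
      YH.Mmu K r n q M ζ c.1 gw) ∧
    (⨆ c : {c : Fin n → Fin r // Monotone c}, YH.Mmu K r n q M ζ c.1 gw) = ⊤ :=
  statement7_general K r n hrK q ζ hζ gw hgw M
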